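/- Let N be any negative translation into IL (i.e., N satisfies soundness: CL + Γ ⊢ A implies IL + N(Γ) ⊢ N(A), and characterisation: CL ⊢ N(A) ↔ A). Then the following are equivalent: (1) N is equivalent in IL to the Gödel–Gentzen translation G (IL ⊢ N(A) ↔ G(A) for all A); (2) for every formula A there is B in the negative fragment with IL ⊢ N(A) ↔ B; (3) IL ⊢ N(A) ↔ A for every A in the negative fragment. -/

import Mathlib

/-- Formulas of pure first-order predicate logic (de Bruijn indices;
terms are just variables, atoms are predicate symbols applied to variables). -/
inductive Formula : Type
  | bot : Formula
  | atom : ℕ → List ℕ → Formula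
  | and : Formula → Formula → Formula
  | or : Formula → Formula → Formula
  | imp : Formula → Formula → Formula
  | all : Formula → Formula
  | ex : Formula → Formula

namespace Formula

def neg (A : Formula) : Formula := A.imp bot
def iff (A B : Formula) : Formula := (A.imp B).and (B.imp A)

/-- Lift (shift by one) the free variables ≥ c. -/
def liftVar (c v : ℕ) : ℕ := if v < c then v else v + 1

def lift : ℕ → Formula → Formula
  | _, bot => bot
  | c, atom p ts => atom p (ts.map (liftVar c))
  | c, and A B => and (lift c A) (lift c B)
  | c, or A B => or (lift c A) (lift c B)
  | c, imp A B => imp (lift c A) (lift c B)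
  | c, all A => all (lift (c+1) A)
  | c, ex A => ex (lift (c+1) A)

/-- Substitute the term (variable) `t` for the bound variable at depth `c`. -/
def substVar (c t v : ℕ) : ℕ := if v < c then v else if v = c then t + c else v - 1

def subst : ℕ → ℕ → Formula → Formula
  | _, _, bot => bot
  | c, t, atom p ts => atom p (ts.map (substVar c t))
  | c, t, and A B => and (subst c t A) (subst c t B)
  | c, t, or A B => or (subst c t A) (subst c t B)
  | c, t, imp A B => imp (subst c t A) (subst c t B)
  | c, t, all A => all (subst (c+1) t A)
  | c, t, ex A => ex (subst (c+1) t A)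

end Formula

/-- The three flavours of logic: minimal, intuitionistic, classical. -/
inductive Flavour : Type
  | min | int | cl
  deriving DecidableEq

/-- Natural deduction. `Prf f Γ A`: A is derivable from hypotheses Γ in
minimal/intuitionistic/classical first-order logic according to `f`. -/
inductive Prf : Flavour → Set Formula → Formula → Prop
  | hyp {f : Flavour} {Γ : Set Formula} {A : Formula} : A ∈ Γ → Prf f Γ A
  | andI {f : Flavour} {Γ : Set Formula} {A B : Formula} : Prf f Γ A → Prf f Γ B → Prf f Γ (A.and B)
  | andE1 {f : Flavour} {Γ : Set Formula} {A B : Formula} : Prf f Γ (A.and B) → Prf f Γ A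
  | andE2 {f : Flavour} {Γ : Set Formula} {A B : Formula} : Prf f Γ (A.and B) → Prf f Γ B
  | orI1 {f : Flavour} {Γ : Set Formula} {A B : Formula} : Prf f Γ A → Prf f Γ (A.or B)
  | orI2 {f : Flavour} {Γ : Set Formula} {A B : Formula} : Prf f Γ B → Prf f Γ (A.or B)
  | orE {f : Flavour} {Γ : Set Formula} {A B C : Formula} : Prf f Γ (A.or B) → Prf f (insert A Γ) C →
      Prf f (insert B Γ) C → Prf f Γ C
  | impI {f : Flavour} {Γ : Set Formula} {A B : Formula} : Prf f (insert A Γ) B → Prf f Γ (A.imp B)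
  | impE {f : Flavour} {Γ : Set Formula} {A B : Formula} : Prf f Γ (A.imp B) → Prf f Γ A → Prf f Γ B
  | allI {f : Flavour} {Γ : Set Formula} {A : Formula} : Prf f (Formula.lift 0 '' Γ) A → Prf f Γ (Formula.all A)
  | allE {f : Flavour} {Γ : Set Formula} {A : Formula} (t : ℕ) : Prf f Γ (Formula.all A) → Prf f Γ (A.subst 0 t)
  | exI {f : Flavour} {Γ : Set Formula} {A : Formula} (t : ℕ) : Prf f Γ (A.subst 0 t) → Prf f Γ (Formula.ex A)
  | exE {f : Flavour} {Γ : Set Formula} {A B : Formula} : Prf f Γ (Formula.ex A) →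
      Prf f (insert A (Formula.lift 0 '' Γ)) (B.lift 0) → Prf f Γ B
  | exfalso {f : Flavour} {Γ : Set Formula} {A : Formula} : f ≠ Flavour.min → Prf f Γ Formula.bot → Prf f Γ A
  | dne {f : Flavour} {Γ : Set Formula} {A : Formula} : f = Flavour.cl → Prf f Γ A.neg.neg → Prf f Γ A

/-- The Gödel–Gentzen negative translation. -/
def G : Formula → Formula
  | .bot => .bot
  | .atom p ts => (Formula.atom p ts).neg.neg
  | .and A B => (G A).and (G B)
  | .or A B => ((G A).neg.and (G B).neg).neg
  | .imp A B => (G A).imp (G B)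
  | .all A => .all (G A)
  | .ex A => (Formula.all (G A).neg).neg

/-- The negative fragment: ⊥, negated atoms, closed under ∧, →, ∀. -/
inductive NF : Formula → Prop
  | bot : NF Formula.bot
  | negAtom (p : ℕ) (ts : List ℕ) : NF (Formula.atom p ts).neg
  | and {A B} : NF A → NF B → NF (A.and B)
  | imp {A B} : NF A → NF B → NF (A.imp B)
  | all {A} : NF A → NF (Formula.all A)


/-! The Gödel–Gentzen translation `G` is sound from CL into IL, lands in the negative fragment,
and is intuitionistically the identity there (negative formulas are stable, `¬¬A → A`).
Together these give conservativity of CL over IL for negative formulas.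

For a negative translation `N`: if `N A ↔ B` with `B` negative, then `B ↔ A` holds classically by
the characterisation property, hence intuitionistically by conservativity; so (2) ⇒ (3).
Soundness makes `N` respect classical equivalence, so `N A ↔ N (G A)`, and under (3) the latter is
`G A`; so (3) ⇒ (1). Finally (1) ⇒ (2) because `G A` is negative. -/

namespace Formula

theorem substVar_zero_liftVar_succ (c v : ℕ) : substVar c 0 (liftVar (c + 1) v) = v := by
  unfold liftVar substVar
  split_ifs <;> omega

theorem subst_zero_lift_succ (A : Formula) (c : ℕ) : (A.lift (c + 1)).subst c 0 = A := by
  induction A generalizing c <;>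
    simp [lift, subst, Function.comp_def, substVar_zero_liftVar_succ, *]

end Formula

theorem G_lift (A : Formula) (c : ℕ) : G (A.lift c) = (G A).lift c := by
  induction A generalizing c <;> simp [G, Formula.lift, Formula.neg, *]

theorem G_subst (A : Formula) (c t : ℕ) : G (A.subst c t) = (G A).subst c t := by
  induction A generalizing c <;> simp [G, Formula.subst, Formula.neg, *]

theorem image_G_image_lift (Γ : Set Formula) :
    G '' (Formula.lift 0 '' Γ) = Formula.lift 0 '' (G '' Γ) := by
  simp only [Set.image_image, G_lift]

theorem NF_G (A : Formula) : NF (G A) := by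
  induction A with
  | bot => exact .bot
  | atom p ts => exact .imp (.negAtom p ts) .bot
  | and _ _ ihA ihB => exact .and ihA ihB
  | or _ _ ihA ihB => exact .imp (.and (.imp ihA .bot) (.imp ihB .bot)) .bot
  | imp _ _ ihA ihB => exact .imp ihA ihB
  | all _ ih => exact .all ih
  | ex _ ih => exact .imp (.all (.imp ih .bot)) .bot

namespace Prf

variable {f : Flavour} {Γ Δ : Set Formula} {A B C D : Formula}

theorem mono (h : Prf f Γ A) (hΓ : Γ ⊆ Δ) : Prf f Δ A := by
  induction h generalizing Δ with
  | hyp h => exact .hyp (hΓ h)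
  | andI _ _ ihA ihB => exact .andI (ihA hΓ) (ihB hΓ)
  | andE1 _ ih => exact .andE1 (ih hΓ)
  | andE2 _ ih => exact .andE2 (ih hΓ)
  | orI1 _ ih => exact .orI1 (ih hΓ)
  | orI2 _ ih => exact .orI2 (ih hΓ)
  | orE _ _ _ ih ihA ihB =>
    exact .orE (ih hΓ) (ihA (Set.insert_subset_insert hΓ)) (ihB (Set.insert_subset_insert hΓ))
  | impI _ ih => exact .impI (ih (Set.insert_subset_insert hΓ))
  | impE _ _ ihAB ihA => exact .impE (ihAB hΓ) (ihA hΓ)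
  | allI _ ih => exact .allI (ih (Set.image_mono hΓ))
  | allE t _ ih => exact .allE t (ih hΓ)
  | exI t _ ih => exact .exI t (ih hΓ)
  | exE _ _ ih ihB => exact .exE (ih hΓ) (ihB (Set.insert_subset_insert (Set.image_mono hΓ)))
  | exfalso hf _ ih => exact .exfalso hf (ih hΓ)
  | dne hf _ ih => exact .dne hf (ih hΓ)

theorem toCl (h : Prf f Γ A) : Prf .cl Γ A := by
  induction h with
  | hyp h => exact .hyp h
  | andI _ _ ihA ihB => exact .andI ihA ihB
  | andE1 _ ih => exact .andE1 ih
  | andE2 _ ih => exact .andE2 ih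
  | orI1 _ ih => exact .orI1 ih
  | orI2 _ ih => exact .orI2 ih
  | orE _ _ _ ih ihA ihB => exact .orE ih ihA ihB
  | impI _ ih => exact .impI ih
  | impE _ _ ihAB ihA => exact .impE ihAB ihA
  | allI _ ih => exact .allI ih
  | allE t _ ih => exact .allE t ih
  | exI t _ ih => exact .exI t ih
  | exE _ _ ih ihB => exact .exE ih ihB
  | exfalso _ _ ih => exact .exfalso (by decide) ih
  | dne _ _ ih => exact .dne rfl ih

theorem weaken (h : Prf f Γ A) : Prf f (insert B Γ) A := h.mono (Set.subset_insert _ _)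

theorem head : Prf f (insert A Γ) A := .hyp (Set.mem_insert _ _)

theorem of_all_lift (h : Prf f Γ (.all (A.lift 1))) : Prf f Γ A := by
  simpa only [Formula.subst_zero_lift_succ] using h.allE 0

theorem ex_lift (h : Prf f Γ A) : Prf f Γ (.ex (A.lift 1)) :=
  .exI 0 (by rwa [Formula.subst_zero_lift_succ])

theorem of_all_mem (h : Formula.all A ∈ Γ) : Prf f (Formula.lift 0 '' Γ) A :=
  of_all_lift (.hyp (Set.mem_image_of_mem _ h))

theorem imp_trans (hAB : Prf f Γ (A.imp B)) (hBC : Prf f Γ (B.imp C)) : Prf f Γ (A.imp C) :=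
  .impI (.impE hBC.weaken (.impE hAB.weaken head))

theorem contra (h : Prf f Γ (A.imp B)) : Prf f Γ (B.neg.imp A.neg) :=
  .impI (.impI (.impE head.weaken (.impE h.weaken.weaken head)))

theorem neg_neg_imp (h : Prf f Γ (A.imp B)) : Prf f Γ (A.neg.neg.imp B.neg.neg) :=
  h.contra.contra

theorem iff_intro (hAB : Prf f Γ (A.imp B)) (hBA : Prf f Γ (B.imp A)) : Prf f Γ (A.iff B) :=
  .andI hAB hBA

theorem iff_mp (h : Prf f Γ (A.iff B)) (hA : Prf f Γ A) : Prf f Γ B := .impE h.andE1 hA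

theorem iff_refl : Prf f Γ (A.iff A) := iff_intro (.impI head) (.impI head)

theorem iff_symm (h : Prf f Γ (A.iff B)) : Prf f Γ (B.iff A) := iff_intro h.andE2 h.andE1

theorem iff_trans (hAB : Prf f Γ (A.iff B)) (hBC : Prf f Γ (B.iff C)) : Prf f Γ (A.iff C) :=
  iff_intro (hAB.andE1.imp_trans hBC.andE1) (hBC.andE2.imp_trans hAB.andE2)

theorem and_congr (hAB : Prf f Γ (A.iff B)) (hCD : Prf f Γ (C.iff D)) :
    Prf f Γ ((A.and C).iff (B.and D)) :=
  iff_intro (.impI (.andI (hAB.weaken.iff_mp (.andE1 head)) (hCD.weaken.iff_mp (.andE2 head))))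
    (.impI (.andI (hAB.iff_symm.weaken.iff_mp (.andE1 head))
      (hCD.iff_symm.weaken.iff_mp (.andE2 head))))

theorem imp_congr (hAB : Prf f Γ (A.iff B)) (hCD : Prf f Γ (C.iff D)) :
    Prf f Γ ((A.imp C).iff (B.imp D)) :=
  iff_intro (.impI ((hAB.andE2.weaken.imp_trans head).imp_trans hCD.andE1.weaken))
    (.impI ((hAB.andE1.weaken.imp_trans head).imp_trans hCD.andE2.weaken))

theorem neg_congr (h : Prf f Γ (A.iff B)) : Prf f Γ (A.neg.iff B.neg) := imp_congr h iff_refl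

theorem all_imp_all (h : ∀ Δ, Prf f Δ (A.imp B)) : Prf f Γ ((Formula.all A).imp (.all B)) :=
  .impI (.allI (.impE (h _) (of_all_mem (Set.mem_insert _ _))))

theorem all_congr (h : ∀ Δ, Prf f Δ (A.iff B)) : Prf f Γ ((Formula.all A).iff (.all B)) :=
  iff_intro (all_imp_all fun Δ => (h Δ).andE1) (all_imp_all fun Δ => (h Δ).andE2)

theorem neg_neg_neg_iff : Prf f Γ (A.neg.neg.neg.iff A.neg) :=
  iff_intro (.impI (.impI (.impE head.weaken (.impI (.impE head head.weaken)))))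
    (.impI (.impI (.impE head head.weaken)))

end Prf

theorem NF.prf_neg_neg_imp {A : Formula} (hA : NF A) (Γ : Set Formula) :
    Prf .int Γ (A.neg.neg.imp A) := by
  induction hA generalizing Γ with
  | bot => exact .impI (.impE .head (.impI .head))
  | negAtom p ts => exact Prf.neg_neg_neg_iff.andE1
  | and _ _ ihA ihB =>
    exact .impI (.andI (.impE (ihA _) (.impE (Prf.neg_neg_imp (.impI (.andE1 .head))) .head))
      (.impE (ihB _) (.impE (Prf.neg_neg_imp (.impI (.andE2 .head))) .head)))
  | imp _ _ _ ihB =>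
    exact .impI (.impI (.impE (ihB _)
      (.impE (Prf.neg_neg_imp (.impI (.impE .head Prf.head.weaken))) Prf.head.weaken)))
  | all _ ih =>
    exact .impI (.allI (.impE (ih _)
      (.impE (Prf.neg_neg_imp (.impI (Prf.of_all_lift .head)))
        (.hyp (Set.mem_image_of_mem _ (Set.mem_insert _ _))))))

theorem NF.prf_by_contra {Γ : Set Formula} {A : Formula} (hA : NF A)
    (h : Prf .int (insert A.neg Γ) .bot) : Prf .int Γ A :=
  .impE (hA.prf_neg_neg_imp Γ) (.impI h)

theorem Prf.int_G_of_cl {Γ : Set Formula} {A : Formula} (h : Prf .cl Γ A) :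
    Prf .int (G '' Γ) (G A) := by
  induction h with
  | hyp h => exact .hyp (Set.mem_image_of_mem _ h)
  | andI _ _ ihA ihB => exact .andI ihA ihB
  | andE1 _ ih => exact .andE1 ih
  | andE2 _ ih => exact .andE2 ih
  | orI1 _ ih => exact .impI (.impE (.andE1 .head) ih.weaken)
  | orI2 _ ih => exact .impI (.impE (.andE2 .head) ih.weaken)
  | @orE _ _ _ C _ _ _ ih ihA ihB =>
    rw [Set.image_insert_eq] at ihA ihB
    exact (NF_G C).prf_by_contra (.impE ih.weaken
      (.andI (.impE (Prf.impI ihA).contra.weaken .head) (.impE (Prf.impI ihB).contra.weaken .head)))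
  | impI _ ih => rw [Set.image_insert_eq] at ih; exact .impI ih
  | impE _ _ ihAB ihA => exact .impE ihAB ihA
  | allI _ ih => rw [image_G_image_lift] at ih; exact .allI ih
  | allE t _ ih => rw [G_subst]; exact .allE t ih
  | exI t _ ih => rw [G_subst] at ih; exact .impI (.impE (.allE t .head) ih.weaken)
  | @exE _ _ B _ _ ih ihB =>
    rw [Set.image_insert_eq, image_G_image_lift, G_lift] at ihB
    refine (NF_G B).prf_by_contra (.impE ih.weaken (.allI ?_))
    rw [Set.image_insert_eq]
    exact .impE (Prf.impI ihB).contra.weaken .head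
  | exfalso _ _ ih => exact .exfalso (by decide) ih
  | dne _ _ ih => exact .impE ((NF_G _).prf_neg_neg_imp _) ih

section Classical

variable {Γ : Set Formula} {A B : Formula}

theorem Prf.cl_neg_neg_iff : Prf .cl Γ (A.neg.neg.iff A) :=
  iff_intro (.impI (.dne rfl .head)) (.impI (.impI (.impE .head Prf.head.weaken)))

theorem Prf.cl_or_iff : Prf .cl Γ ((A.neg.and B.neg).neg.iff (A.or B)) :=
  iff_intro
    (.impI (.dne rfl (.impI (.impE Prf.head.weaken
      (.andI (.impI (.impE Prf.head.weaken (.orI1 .head)))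
        (.impI (.impE Prf.head.weaken (.orI2 .head))))))))
    (.impI (.impI (.orE Prf.head.weaken (.impE (.andE1 Prf.head.weaken) .head)
      (.impE (.andE2 Prf.head.weaken) .head))))

theorem Prf.cl_ex_iff : Prf .cl Γ ((Formula.all A.neg).neg.iff (.ex A)) := by
  refine iff_intro (.impI (.dne rfl (.impI (.impE Prf.head.weaken (.allI ?_)))))
    (.impI (.impI (.exE Prf.head.weaken
      (.impE (Prf.of_all_mem (A := A.neg) (Set.mem_insert _ _)).weaken .head))))
  rw [Set.image_insert_eq]
  exact .impI (.impE Prf.head.weaken (Prf.ex_lift .head))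

theorem Prf.cl_G_iff (A : Formula) (Γ : Set Formula) : Prf .cl Γ ((G A).iff A) := by
  induction A generalizing Γ with
  | bot => exact iff_refl
  | atom p ts => exact cl_neg_neg_iff
  | and _ _ ihA ihB => exact and_congr (ihA Γ) (ihB Γ)
  | or _ _ ihA ihB =>
    exact (neg_congr (and_congr (neg_congr (ihA Γ)) (neg_congr (ihB Γ)))).iff_trans cl_or_iff
  | imp _ _ ihA ihB => exact imp_congr (ihA Γ) (ihB Γ)
  | all _ ih => exact all_congr ih
  | ex _ ih => exact (neg_congr (all_congr fun Δ => neg_congr (ih Δ))).iff_trans cl_ex_iff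

end Classical

theorem NF.prf_G_iff {A : Formula} (hA : NF A) (Γ : Set Formula) : Prf .int Γ ((G A).iff A) := by
  induction hA generalizing Γ with
  | bot => exact Prf.iff_refl
  | negAtom p ts => exact Prf.neg_neg_neg_iff
  | and _ _ ihA ihB => exact Prf.and_congr (ihA Γ) (ihB Γ)
  | imp _ _ ihA ihB => exact Prf.imp_congr (ihA Γ) (ihB Γ)
  | all _ ih => exact Prf.all_congr ih

theorem NF.int_of_cl {A : Formula} (hA : NF A) (h : Prf .cl ∅ A) : Prf .int ∅ A := by
  have hG := h.int_G_of_cl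
  rw [Set.image_empty] at hG
  exact (hA.prf_G_iff ∅).iff_mp hG

section Translation

variable {N : Formula → Formula} {A B : Formula}

theorem Prf.translate_imp
    (sound : ∀ Γ A, Prf .cl Γ A → Prf .int (N '' Γ) (N A)) (h : Prf .cl ∅ (A.imp B)) :
    Prf .int ∅ ((N A).imp (N B)) := by
  have hNB := sound _ _ (h.weaken.impE (head (Γ := ∅)))
  rw [Set.image_insert_eq, Set.image_empty] at hNB
  exact .impI hNB

theorem Prf.translate_iff
    (sound : ∀ Γ A, Prf .cl Γ A → Prf .int (N '' Γ) (N A)) (h : Prf .cl ∅ (A.iff B)) :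
    Prf .int ∅ ((N A).iff (N B)) :=
  iff_intro (translate_imp sound h.andE1) (translate_imp sound h.andE2)

end Translation

/-- For a negative translation N into IL, the following are equivalent:
(1) N is IL-equivalent to G; (2) N translates into the negative fragment in IL;
(3) N acts as the identity on the negative fragment in IL. -/
theorem negative_translation_characterisation (N : Formula → Formula)
    (sound : ∀ (Γ : Set Formula) (A : Formula),
      Prf Flavour.cl Γ A → Prf Flavour.int (N '' Γ) (N A))
    (char : ∀ A : Formula, Prf Flavour.cl ∅ ((N A).iff A)) :
    ((∀ A : Formula, Prf Flavour.int ∅ ((N A).iff (G A))) ↔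
      (∀ A : Formula, ∃ B : Formula, NF B ∧ Prf Flavour.int ∅ ((N A).iff B))) ∧
    ((∀ A : Formula, ∃ B : Formula, NF B ∧ Prf Flavour.int ∅ ((N A).iff B)) ↔
      (∀ A : Formula, NF A → Prf Flavour.int ∅ ((N A).iff A))) := by
  have h23 : (∀ A, ∃ B, NF B ∧ Prf .int ∅ ((N A).iff B)) →
      ∀ A, NF A → Prf .int ∅ ((N A).iff A) := by
    intro h2 A hA
    obtain ⟨B, hB, hNB⟩ := h2 A
    have hBA : Prf .cl ∅ (B.iff A) := hNB.toCl.iff_symm.iff_trans (char A)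
    exact hNB.iff_trans (((hB.imp hA).and (hA.imp hB)).int_of_cl hBA)
  have h31 : (∀ A, NF A → Prf .int ∅ ((N A).iff A)) → ∀ A, Prf .int ∅ ((N A).iff (G A)) :=
    fun h3 A => (Prf.translate_iff sound (Prf.cl_G_iff A ∅).iff_symm).iff_trans (h3 _ (NF_G A))
  exact ⟨⟨fun h1 A => ⟨G A, NF_G A, h1 A⟩, fun h2 => h31 (h23 h2)⟩,
    ⟨h23, fun h3 A => ⟨G A, NF_G A, h31 h3 A⟩⟩⟩
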